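/- The expected Euclidean distance between two independent points uniformly distributed in the unit square [0,1]^2 equals (2 + √2 + 5·ln(√2 + 1))/15. -/

import Mathlib

open MeasureTheory Real Set intervalIntegral Filter Topology

attribute [fun_prop] Real.continuous_arsinh


noncomputable def Af (s : ℝ) : ℝ :=
  Real.sqrt (s^2+1)/2 + s^2/2 * Real.arsinh (1/s) - (s^2+1)*Real.sqrt (s^2+1)/3 + s^3/3

lemma hasDerivAt_sqrt_sq_add (s t : ℝ) (h : s^2 + t^2 ≠ 0) :
    HasDerivAt (fun t => Real.sqrt (s^2+t^2)) (t / Real.sqrt (s^2+t^2)) t := by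
  have h1 : HasDerivAt (fun t : ℝ => s^2 + t^2) (2*t) t := by
    simpa using ((hasDerivAt_pow 2 t).const_add (s^2))
  have := (Real.hasDerivAt_sqrt h).comp t h1
  refine this.congr_deriv ?_
  have hpos : 0 < Real.sqrt (s^2+t^2) := Real.sqrt_pos.2 (lt_of_le_of_ne (by positivity) (Ne.symm h))
  field_simp

lemma inner_eval (s : ℝ) (hs : 0 ≤ s) :
    ∫ t in (0:ℝ)..1, (1-t) * Real.sqrt (s^2+t^2) = Af s := by
  rcases eq_or_lt_of_le hs with rfl | hs
  · have : EqOn (fun t : ℝ => (1-t) * Real.sqrt ((0:ℝ)^2+t^2)) (fun t => (1-t)*t) (uIcc 0 1) := by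
      intro t ht
      rw [uIcc_of_le zero_le_one] at ht
      simp only [zero_pow, zero_add]
      rw [show (0:ℝ)^2 + t^2 = t^2 by ring, Real.sqrt_sq ht.1]
    rw [intervalIntegral.integral_congr this]
    simp only [Af]
    rw [show (fun t : ℝ => (1-t)*t) = (fun t : ℝ => t - t^2) from funext fun t => by ring]
    rw [intervalIntegral.integral_sub ((by fun_prop : Continuous fun t:ℝ => t).intervalIntegrable 0 1)
      ((continuous_pow 2).intervalIntegrable 0 1)]
    simp [integral_pow, integral_id]
    norm_num
  · -- s > 0
    set F : ℝ → ℝ := fun t => (t*Real.sqrt (s^2+t^2) + s^2 * Real.arsinh (t/s))/2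
        - (s^2+t^2)*Real.sqrt (s^2+t^2)/3 with hF
    have hpos : ∀ t : ℝ, (0:ℝ) < s^2 + t^2 := fun t => by positivity
    have hderiv : ∀ t ∈ uIcc (0:ℝ) 1, HasDerivAt F ((1-t) * Real.sqrt (s^2+t^2)) t := by
      intro t _
      have hq : 0 < Real.sqrt (s^2+t^2) := Real.sqrt_pos.2 (hpos t)
      have h1 : HasDerivAt (fun t => Real.sqrt (s^2+t^2)) (t / Real.sqrt (s^2+t^2)) t :=
        hasDerivAt_sqrt_sq_add s t (hpos t).ne'
      have h2 : HasDerivAt (fun t : ℝ => t * Real.sqrt (s^2+t^2))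
          (Real.sqrt (s^2+t^2) + t * (t / Real.sqrt (s^2+t^2))) t := by
        exact ((hasDerivAt_id t).mul h1).congr_deriv (by simp)
      have h3 : HasDerivAt (fun t : ℝ => Real.arsinh (t/s)) (1 / Real.sqrt (s^2+t^2)) t := by
        have hdiv : HasDerivAt (fun t : ℝ => t/s) (1/s) t := (hasDerivAt_id t).div_const s
        have := (Real.hasDerivAt_arsinh (t/s)).comp t hdiv
        refine this.congr_deriv ?_
        have hsq : Real.sqrt (1 + (t/s)^2) = Real.sqrt (s^2+t^2) / s := by
          rw [show (1:ℝ) + (t/s)^2 = (s^2+t^2)/s^2 by field_simp,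
            Real.sqrt_div (by positivity) _, Real.sqrt_sq hs.le]
        rw [hsq]
        field_simp
      have h4 : HasDerivAt (fun t : ℝ => (s^2+t^2) * Real.sqrt (s^2+t^2))
          (2*t*Real.sqrt (s^2+t^2) + (s^2+t^2)*(t / Real.sqrt (s^2+t^2))) t := by
        have h5 : HasDerivAt (fun t : ℝ => s^2 + t^2) (2*t) t := by
          simpa using ((hasDerivAt_pow 2 t).const_add (s^2))
        exact h5.mul h1
      have := ((h2.add ((h3.const_mul (s^2)))).div_const 2).sub (h4.div_const 3)
      refine this.congr_deriv ?_
      have hsq : Real.sqrt (s^2+t^2) * Real.sqrt (s^2+t^2) = s^2+t^2 :=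
        Real.mul_self_sqrt (hpos t).le
      field_simp
      linear_combination (2*t-3) * hsq
    have hint : IntervalIntegrable (fun t => (1-t) * Real.sqrt (s^2+t^2)) volume 0 1 :=
      (by fun_prop : Continuous fun t => (1-t) * Real.sqrt (s^2+t^2)).intervalIntegrable 0 1
    rw [intervalIntegral.integral_eq_sub_of_hasDerivAt hderiv hint]
    simp only [hF, Af, one_div]
    norm_num [Real.arsinh_zero, Real.sqrt_sq hs.le]
    ring


lemma even_reduction (f : ℝ → ℝ) (hc : Continuous f) (he : ∀ x, f (-x) = f x) :
    ∫ u in (0:ℝ)..1, ∫ v in (0:ℝ)..1, f (u - v) = 2 * ∫ t in (0:ℝ)..1, (1-t) * f t := by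
  set F : ℝ → ℝ := fun x => ∫ y in (0:ℝ)..x, f y with hFdef
  have hFd : ∀ x : ℝ, HasDerivAt F (f x) x := fun x =>
    (hc.integral_hasStrictDerivAt 0 x).hasDerivAt
  have hFc : Continuous F := by
    rw [continuous_iff_continuousAt]; exact fun x => (hFd x).continuousAt
  have h1 : ∀ u : ℝ, (∫ v in (0:ℝ)..1, f (u - v)) = F u - F (u-1) := by
    intro u
    rw [intervalIntegral.integral_comp_sub_left f u]
    have := intervalIntegral.integral_add_adjacent_intervals (a := (0:ℝ)) (b := u-1) (c := u)
      (μ := volume) (hc.intervalIntegrable _ _) (hc.intervalIntegrable _ _)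
    simp only [hFdef]
    norm_num
    linarith [this]
  have hFodd : ∀ x : ℝ, F (-x) = - F x := by
    intro x
    have h2 : ∫ y in x..(0:ℝ), f (-y) = ∫ y in (0:ℝ)..(-x), f y := by
      simpa using intervalIntegral.integral_comp_neg (a := x) (b := (0:ℝ)) (f := f)
    simp only [hFdef]
    rw [← h2, intervalIntegral.integral_congr (g := f) (fun y _ => he y),
      intervalIntegral.integral_symm]
  simp_rw [h1]
  rw [intervalIntegral.integral_sub (f := F) (g := fun u => F (u-1))
    (hFc.intervalIntegrable _ _)
    ((by fun_prop : Continuous fun u : ℝ => F (u-1)).intervalIntegrable _ _)]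
  have h3 : (∫ u in (0:ℝ)..1, F (u-1)) = - ∫ u in (0:ℝ)..1, F u := by
    rw [intervalIntegral.integral_comp_sub_right F 1]
    have h4 : ∫ u in (0:ℝ)..1, F (-u) = ∫ u in (-1:ℝ)..0, F u := by
      simpa using intervalIntegral.integral_comp_neg (a := (0:ℝ)) (b := 1) (f := F)
    rw [show (0:ℝ)-1 = -1 by norm_num, show (1:ℝ)-1 = 0 by norm_num, ← h4,
      intervalIntegral.integral_congr (g := fun u => - F u) (fun u _ => hFodd u),
      intervalIntegral.integral_neg]
  rw [h3]
  have h5 : ∫ u in (0:ℝ)..1, F u = F 1 - ∫ u in (0:ℝ)..1, u * f u := by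
    have hibp := intervalIntegral.integral_mul_deriv_eq_deriv_mul
      (a := (0:ℝ)) (b := 1) (u := F) (v := fun x => x) (u' := f) (v' := fun _ => (1:ℝ))
      (fun x _ => hFd x) (fun x _ => hasDerivAt_id x)
      (hc.intervalIntegrable _ _) (continuous_const.intervalIntegrable _ _)
    simp only [mul_one, mul_zero, sub_zero] at hibp
    rw [hibp]
    congr 1
    apply intervalIntegral.integral_congr; intro u _; ring
  rw [h5]
  have h6 : ∫ t in (0:ℝ)..1, (1-t) * f t
      = (∫ t in (0:ℝ)..1, f t) - ∫ t in (0:ℝ)..1, t * f t := by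
    rw [← intervalIntegral.integral_sub (f := f) (g := fun t => t * f t) (hc.intervalIntegrable _ _)
      ((continuous_id'.mul hc).intervalIntegrable _ _ : IntervalIntegrable (fun t => t * f t) volume 0 1)]
    apply intervalIntegral.integral_congr; intro t _; ring
  rw [h6]
  have : F 1 = ∫ t in (0:ℝ)..1, f t := rfl
  rw [this]; ring

lemma contOn_sq_arsinh : ContinuousOn (fun s : ℝ => s^2 * Real.arsinh (1/s)) (Icc 0 1) := by
  intro x hx
  rcases eq_or_ne x 0 with rfl | hx0
  · rw [← continuousWithinAt_diff_self]
    have hmono : 𝓝[Icc (0:ℝ) 1 \ {0}] 0 ≤ 𝓝[>] (0:ℝ) := by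
      apply nhdsWithin_mono
      rintro y ⟨⟨h1, _⟩, h2⟩
      exact lt_of_le_of_ne h1 (Ne.symm h2)
    have key : Tendsto (fun s : ℝ => s^2 * Real.arsinh (1/s)) (𝓝[>] (0:ℝ)) (𝓝 0) := by
      have hbound : ∀ s ∈ Ioo (0:ℝ) 1, s^2 * Real.arsinh (1/s) ≤ s^2 * (Real.log 3 - Real.log s) := by
        intro s hs
        apply mul_le_mul_of_nonneg_left _ (by positivity)
        have h1 : Real.arsinh (1/s) = Real.log (1/s + Real.sqrt (1 + (1/s)^2)) := rfl
        rw [h1]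
        have h2 : Real.sqrt (1 + (1/s)^2) ≤ 1 + 1/s := by
          rw [show (1:ℝ) + 1/s = Real.sqrt ((1+1/s)^2) from
            (Real.sqrt_sq (by have h0 : (0:ℝ) < 1/s := one_div_pos.2 hs.1; linarith)).symm]
          apply Real.sqrt_le_sqrt
          nlinarith [le_of_lt hs.1, one_div_pos.2 hs.1]
        have hs0 : 0 < s := hs.1
        have hinv : 0 < 1/s := one_div_pos.2 hs0
        have e2 : (2:ℝ)/s = 1/s + 1/s := by ring
        have e3 : (3:ℝ)/s = 1/s + (1/s + 1/s) := by ring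
        have hle1 : (1:ℝ) ≤ 1/s := by rw [le_div_iff₀ hs0, one_mul]; exact hs.2.le
        calc Real.log (1/s + Real.sqrt (1 + (1/s)^2)) ≤ Real.log (1 + 2/s) := by
              apply Real.log_le_log
                (add_pos_of_pos_of_nonneg hinv (Real.sqrt_nonneg _))
              linarith [h2]
          _ ≤ Real.log (3/s) := by
              apply Real.log_le_log (by linarith)
              linarith
          _ = Real.log 3 - Real.log s := Real.log_div (by norm_num) (ne_of_gt hs0)
      have hup : Tendsto (fun s : ℝ => s^2 * (Real.log 3 - Real.log s)) (𝓝[>] (0:ℝ)) (𝓝 0) := by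
        have hl : Tendsto (fun s : ℝ => Real.log s * s^2) (𝓝[>] (0:ℝ)) (𝓝 0) := by
          have := tendsto_log_mul_rpow_nhdsGT_zero (r := 2) (by norm_num)
          apply this.congr'
          filter_upwards [self_mem_nhdsWithin] with s (hs : 0 < s)
          rw [show s ^ (2:ℝ) = s^2 by rw [← Real.rpow_natCast s 2]; norm_num]
        have hsq : Tendsto (fun s : ℝ => s^2 * Real.log 3) (𝓝[>] (0:ℝ)) (𝓝 0) := by
          have : Tendsto (fun s : ℝ => s^2) (𝓝[>] (0:ℝ)) (𝓝 0) := by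
            apply Tendsto.mono_left _ nhdsWithin_le_nhds
            have := (continuous_pow 2 (M := ℝ)).tendsto 0
            simpa using this
          simpa using this.mul_const (Real.log 3)
        have := hsq.sub hl
        simpa [mul_sub, mul_comm] using this
      apply squeeze_zero'
      · filter_upwards [self_mem_nhdsWithin] with s (hs : 0 < s)
        have : 0 ≤ Real.arsinh (1/s) := Real.arsinh_nonneg_iff.2 (by positivity)
        positivity
      · filter_upwards [Ioo_mem_nhdsGT_of_mem (by norm_num : (0:ℝ) ∈ Ico 0 1)] with s hs
        exact hbound s hs
      · exact hup
    unfold ContinuousWithinAt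
    have h9 := key.mono_left hmono
    convert h9 using 2
    show (0:ℝ)^2 * Real.arsinh (1/0) = 0
    rw [div_zero, Real.arsinh_zero]; ring
  · apply ContinuousAt.continuousWithinAt
    have : ContinuousAt (fun s : ℝ => Real.arsinh (1/s)) x :=
      Real.continuous_arsinh.continuousAt.comp ((continuousAt_const.div continuousAt_id hx0))
    exact ((continuous_pow 2).continuousAt).mul this


noncomputable def Hf (s : ℝ) : ℝ :=
  (s*Real.sqrt (s^2+1) + Real.arsinh s)/4 - (s^2+1)*Real.sqrt (s^2+1)/6
  + (s*Real.sqrt (s^2+1) - Real.arsinh s)/12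
  - ((s^2+1)*Real.sqrt (s^2+1)/3 - Real.sqrt (s^2+1))/8
  - (s*((s^2+1)*Real.sqrt (s^2+1))/4 + 3*(s*Real.sqrt (s^2+1) + Real.arsinh s)/8)/3
  + (s^2+1)^2*Real.sqrt (s^2+1)/15 + s^4/12 - s^5/15
  + (s/6 - s^2/8) * (s^2 * Real.arsinh (1/s))

lemma hd_sqrt (x : ℝ) : HasDerivAt (fun x : ℝ => Real.sqrt (x^2+1)) (x / Real.sqrt (x^2+1)) x := by
  have h1 : HasDerivAt (fun x : ℝ => x^2 + 1) (2*x) x := by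
    simpa using (hasDerivAt_pow 2 x).add_const 1
  have h0 : (x:ℝ)^2 + 1 ≠ 0 := by positivity
  have := (Real.hasDerivAt_sqrt h0).comp x h1
  refine this.congr_deriv ?_
  have hpos : 0 < Real.sqrt (x^2+1) := Real.sqrt_pos.2 (by positivity)
  field_simp

lemma hd_arsinh' (x : ℝ) : HasDerivAt Real.arsinh (1 / Real.sqrt (x^2+1)) x := by
  have := Real.hasDerivAt_arsinh x
  convert this using 1
  rw [add_comm (x^2) 1, one_div]

lemma hd_arsinh_inv (x : ℝ) (hx : 0 < x) :
    HasDerivAt (fun x : ℝ => Real.arsinh (1/x)) (-(1 / (x * Real.sqrt (x^2+1)))) x := by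
  have h1 : HasDerivAt (fun x : ℝ => 1/x) (-(1/x^2)) x := by
    simpa [one_div] using hasDerivAt_inv (ne_of_gt hx)
  have := (Real.hasDerivAt_arsinh (1/x)).comp x h1
  refine this.congr_deriv ?_
  have hsq : Real.sqrt (1 + (1/x)^2) = Real.sqrt (x^2+1) / x := by
    rw [show (1:ℝ) + (1/x)^2 = (x^2+1)/x^2 by field_simp,
      Real.sqrt_div (by positivity) _, Real.sqrt_sq hx.le]
  rw [hsq]
  have hpos : 0 < Real.sqrt (x^2+1) := Real.sqrt_pos.2 (by positivity)
  field_simp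

lemma outer_deriv (s : ℝ) (hs : 0 < s) : HasDerivAt Hf ((1-s) * Af s) s := by
  have hq : 0 < Real.sqrt (s^2+1) := Real.sqrt_pos.2 (by positivity)
  have hq2 : Real.sqrt (s^2+1) * Real.sqrt (s^2+1) = s^2+1 := Real.mul_self_sqrt (by positivity)
  have h1 := hd_sqrt s
  have ha := hd_arsinh' s
  have hai := hd_arsinh_inv s hs
  have hx2 : HasDerivAt (fun x : ℝ => x^2 + 1) (2*s) s := by
    simpa using (hasDerivAt_pow 2 s).add_const 1
  have hms : HasDerivAt (fun x : ℝ => x * Real.sqrt (x^2+1))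
      (1 * Real.sqrt (s^2+1) + s * (s / Real.sqrt (s^2+1))) s := (hasDerivAt_id s).mul h1
  have hc3 : HasDerivAt (fun x : ℝ => (x^2+1) * Real.sqrt (x^2+1))
      (2*s * Real.sqrt (s^2+1) + (s^2+1) * (s / Real.sqrt (s^2+1))) s := hx2.mul h1
  have hp2 : HasDerivAt (fun x : ℝ => (x^2+1)^2) (2 * (s^2+1) ^ 1 * (2*s)) s := hx2.pow 2
  have hc5 : HasDerivAt (fun x : ℝ => (x^2+1)^2 * Real.sqrt (x^2+1))
      (2 * (s^2+1) ^ 1 * (2*s) * Real.sqrt (s^2+1) + (s^2+1)^2 * (s / Real.sqrt (s^2+1))) s :=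
    hp2.mul h1
  have h7i : HasDerivAt (fun x : ℝ => x * ((x^2+1) * Real.sqrt (x^2+1)))
      (1 * ((s^2+1) * Real.sqrt (s^2+1))
        + s * (2*s * Real.sqrt (s^2+1) + (s^2+1) * (s / Real.sqrt (s^2+1)))) s :=
    (hasDerivAt_id s).mul hc3
  have hsing1 : HasDerivAt (fun x : ℝ => x/6 - x^2/8) (1/6 - 2*s/8) s := by
    have := ((hasDerivAt_id s).div_const 6).sub ((hasDerivAt_pow 2 s).div_const 8)
    exact this.congr_deriv (by norm_num)
  have hsing2 : HasDerivAt (fun x : ℝ => x^2 * Real.arsinh (1/x))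
      (2*s^1 * Real.arsinh (1/s) + s^2 * (-(1 / (s * Real.sqrt (s^2+1))))) s :=
    (hasDerivAt_pow 2 s).mul hai
  have hsing : HasDerivAt (fun x : ℝ => (x/6 - x^2/8) * (x^2 * Real.arsinh (1/x)))
      ((1/6 - 2*s/8) * (s^2 * Real.arsinh (1/s))
        + (s/6 - s^2/8) * (2*s^1 * Real.arsinh (1/s) + s^2 * (-(1 / (s * Real.sqrt (s^2+1)))))) s :=
    hsing1.mul hsing2
  have h4 : HasDerivAt (fun x : ℝ => x^4/12) (4*s^3/12) s := by
    simpa using (hasDerivAt_pow 4 s).div_const 12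
  have h5 : HasDerivAt (fun x : ℝ => x^5/15) (5*s^4/15) s := by
    simpa using (hasDerivAt_pow 5 s).div_const 15
  have total := ((((((((hms.add ha).div_const 4).sub (hc3.div_const 6)).add
      ((hms.sub ha).div_const 12)).sub (((hc3.div_const 3).sub h1).div_const 8)).sub
      (((h7i.div_const 4).add (((hms.add ha).const_mul 3).div_const 8)).div_const 3)).add
      (hc5.div_const 15)).add h4).sub h5 |>.add hsing
  have heq : HasDerivAt Hf ((((((((1 * Real.sqrt (s^2+1) + s * (s / Real.sqrt (s^2+1))
      + 1 / Real.sqrt (s^2+1))/4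
      - (2*s * Real.sqrt (s^2+1) + (s^2+1) * (s / Real.sqrt (s^2+1)))/6)
      + (1 * Real.sqrt (s^2+1) + s * (s / Real.sqrt (s^2+1)) - 1 / Real.sqrt (s^2+1))/12)
      - ((2*s * Real.sqrt (s^2+1) + (s^2+1) * (s / Real.sqrt (s^2+1)))/3 - s / Real.sqrt (s^2+1))/8)
      - ((1 * ((s^2+1) * Real.sqrt (s^2+1))
          + s * (2*s * Real.sqrt (s^2+1) + (s^2+1) * (s / Real.sqrt (s^2+1))))/4
        + 3 * (1 * Real.sqrt (s^2+1) + s * (s / Real.sqrt (s^2+1)) + 1 / Real.sqrt (s^2+1))/8)/3)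
      + (2 * (s^2+1) ^ 1 * (2*s) * Real.sqrt (s^2+1) + (s^2+1)^2 * (s / Real.sqrt (s^2+1)))/15)
      + 4*s^3/12) - 5*s^4/15
      + ((1/6 - 2*s/8) * (s^2 * Real.arsinh (1/s))
        + (s/6 - s^2/8) * (2*s^1 * Real.arsinh (1/s) + s^2 * (-(1 / (s * Real.sqrt (s^2+1))))))) s := by
    exact total
  convert heq using 1
  unfold Af
  have hq2' : Real.sqrt (1+s^2) * Real.sqrt (1+s^2) = 1+s^2 := Real.mul_self_sqrt (by positivity)
  field_simp
  ring_nf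
  linear_combination (8640 - 3456*s - 17280*s^2 + 13824*s^3) * hq2'

lemma Af_contOn : ContinuousOn Af (Set.Icc 0 1) := by
  have h : Af = fun s => (Real.sqrt (s^2+1)/2 - (s^2+1)*Real.sqrt (s^2+1)/3 + s^3/3)
      + (s^2 * Real.arsinh (1/s)) / 2 := by
    funext s; unfold Af; ring
  rw [h]
  apply ContinuousOn.add
  · apply Continuous.continuousOn; fun_prop
  · exact contOn_sq_arsinh.div_const 2

lemma Hf_contOn : ContinuousOn Hf (Set.Icc 0 1) := by
  unfold Hf
  apply ContinuousOn.add
  · apply Continuous.continuousOn; fun_prop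
  · exact (Continuous.continuousOn (by fun_prop)).mul contOn_sq_arsinh

lemma outer_eval :
    ∫ s in (0:ℝ)..1, (1-s) * Af s = (2 + Real.sqrt 2 + 5 * Real.arsinh 1)/60 := by
  have hint : IntervalIntegrable (fun s => (1-s) * Af s) volume 0 1 := by
    apply ContinuousOn.intervalIntegrable
    rw [uIcc_of_le zero_le_one]
    exact (Continuous.continuousOn (by fun_prop)).mul Af_contOn
  have hftc := intervalIntegral.integral_eq_sub_of_hasDeriv_right_of_le zero_le_one
    Hf_contOn (fun x hx => (outer_deriv x hx.1).hasDerivWithinAt) hint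
  rw [hftc]
  unfold Hf
  norm_num [Real.arsinh_zero, Real.sqrt_one, div_zero]
  ring_nf

noncomputable def Bf (x : ℝ) : ℝ := ∫ t in (0:ℝ)..1, (1-t) * Real.sqrt (x^2+t^2)

lemma Bf_continuous : Continuous Bf := by
  apply intervalIntegral.continuous_parametric_intervalIntegral_of_continuous'
    (f := fun (x : ℝ) (t : ℝ) => (1-t) * Real.sqrt (x^2+t^2))
  fun_prop

lemma swap_general (F : ℝ → ℝ → ℝ) (hF : Continuous (Function.uncurry F)) :
    (∫ b in (0:ℝ)..1, ∫ c in (0:ℝ)..1, F b c) = ∫ c in (0:ℝ)..1, ∫ b in (0:ℝ)..1, F b c := by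
  rw [intervalIntegral.integral_of_le zero_le_one, intervalIntegral.integral_of_le zero_le_one]
  simp_rw [intervalIntegral.integral_of_le zero_le_one]
  apply MeasureTheory.integral_integral_swap
  rw [Measure.prod_restrict]
  have hInt : IntegrableOn (Function.uncurry F) (Set.Icc 0 1 ×ˢ Set.Icc 0 1)
      (volume.prod volume) := by
    rw [← Measure.volume_eq_prod]
    exact hF.continuousOn.integrableOn_compact (isCompact_Icc.prod isCompact_Icc)
  exact hInt.mono_set (Set.prod_mono Set.Ioc_subset_Icc_self Set.Ioc_subset_Icc_self)

lemma quadruple_eval :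
    (∫ a in (0:ℝ)..1, ∫ b in (0:ℝ)..1, ∫ c in (0:ℝ)..1, ∫ d in (0:ℝ)..1,
      Real.sqrt ((a-c)^2 + (b-d)^2))
    = (2 + Real.sqrt 2 + 5 * Real.arsinh 1)/15 := by
  have step1 : (∫ a in (0:ℝ)..1, ∫ b in (0:ℝ)..1, ∫ c in (0:ℝ)..1, ∫ d in (0:ℝ)..1,
      Real.sqrt ((a-c)^2 + (b-d)^2))
      = ∫ a in (0:ℝ)..1, ∫ c in (0:ℝ)..1, ∫ b in (0:ℝ)..1, ∫ d in (0:ℝ)..1,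
      Real.sqrt ((a-c)^2 + (b-d)^2) := by
    apply intervalIntegral.integral_congr
    intro a _
    apply swap_general (fun b c => ∫ d in (0:ℝ)..1, Real.sqrt ((a-c)^2 + (b-d)^2))
    apply intervalIntegral.continuous_parametric_intervalIntegral_of_continuous'
      (f := fun (p : ℝ × ℝ) (d : ℝ) => Real.sqrt ((a-p.2)^2 + (p.1-d)^2))
    fun_prop
  rw [step1]
  have step2 : ∀ x : ℝ, (∫ b in (0:ℝ)..1, ∫ d in (0:ℝ)..1, Real.sqrt (x^2 + (b-d)^2))
      = 2 * Bf x := by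
    intro x
    exact even_reduction (fun t => Real.sqrt (x^2 + t^2)) (by fun_prop)
      (fun t => by show Real.sqrt (x^2+(-t)^2) = Real.sqrt (x^2+t^2); rw [neg_sq])
  simp_rw [step2]
  have step3 : (∫ a in (0:ℝ)..1, ∫ c in (0:ℝ)..1, 2 * Bf (a - c))
      = 2 * ∫ t in (0:ℝ)..1, (1-t) * (2 * Bf t) :=
    even_reduction (fun x => 2 * Bf x) (by exact continuous_const.mul Bf_continuous)
      (fun x => by show 2 * Bf (-x) = 2 * Bf x; rw [show Bf (-x) = Bf x from by unfold Bf; simp [neg_sq]])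
  rw [step3]
  have step4 : (∫ t in (0:ℝ)..1, (1-t) * (2 * Bf t)) = 2 * ∫ t in (0:ℝ)..1, (1-t) * Af t := by
    rw [← intervalIntegral.integral_const_mul]
    apply intervalIntegral.integral_congr
    intro t ht
    rw [uIcc_of_le zero_le_one] at ht
    show (1-t) * (2 * Bf t) = 2 * ((1-t) * Af t)
    rw [show Bf t = Af t from inner_eval t ht.1]
    ring
  rw [step4, outer_eval]
  ring

open ProbabilityTheory

/-- The uniform probability measure on the unit square `[0,1]^2`. -/
noncomputable def unifSquare : Measure (EuclideanSpace ℝ (Fin 2)) :=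
  volume.restrict {x | ∀ i, x i ∈ Set.Icc (0 : ℝ) 1}

section Final

instance : SFinite unifSquare := by unfold unifSquare; infer_instance

noncomputable def φe : EuclideanSpace ℝ (Fin 2) ≃ᵐ ℝ × ℝ :=
  (MeasurableEquiv.toLp 2 (Fin 2 → ℝ)).symm.trans (MeasurableEquiv.finTwoArrow)

lemma hφ : MeasurePreserving φe volume volume :=
  (volume_preserving_finTwoArrow ℝ).comp (EuclideanSpace.volume_preserving_symm_measurableEquiv_toLp (Fin 2))

lemma hpre : φe ⁻¹' (Set.Icc (0:ℝ) 1 ×ˢ Set.Icc (0:ℝ) 1)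
    = {x : EuclideanSpace ℝ (Fin 2) | ∀ i, x i ∈ Set.Icc (0 : ℝ) 1} := by
  ext x
  have hx : φe x = (x 0, x 1) := rfl
  simp only [Set.mem_preimage, hx, Set.mem_prod, Set.mem_setOf_eq, Fin.forall_fin_two]

lemma hUS : MeasurePreserving φe unifSquare
    (volume.restrict (Set.Icc (0:ℝ) 1 ×ˢ Set.Icc (0:ℝ) 1)) := by
  refine ⟨φe.measurable, ?_⟩
  have hR : MeasurableSet (Set.Icc (0:ℝ) 1 ×ˢ Set.Icc (0:ℝ) 1) :=
    (measurableSet_Icc.prod measurableSet_Icc)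
  have h := Measure.restrict_map (μ := volume) φe.measurable hR
  rw [hφ.map_eq] at h
  rw [unifSquare, ← hpre, ← h]

lemma unifSquare_univ : unifSquare Set.univ = 1 := by
  have h1 : unifSquare (φe ⁻¹' Set.univ)
      = (volume.restrict (Set.Icc (0:ℝ) 1 ×ˢ Set.Icc (0:ℝ) 1)) Set.univ :=
    hUS.measure_preimage MeasurableSet.univ.nullMeasurableSet
  rw [Set.preimage_univ] at h1
  rw [h1, Measure.restrict_apply_univ, Measure.volume_eq_prod, Measure.prod_prod,
    Real.volume_Icc]
  norm_num

/-- The expected Euclidean distance between two independent points uniformly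
distributed in the unit square equals `(2 + √2 + 5 ln(√2 + 1))/15`. -/
theorem expected_dist_unit_square {Ω : Type*} [MeasureSpace Ω]
    [IsProbabilityMeasure (ℙ : Measure Ω)]
    (P Q : Ω → EuclideanSpace ℝ (Fin 2))
    (hPQ : IndepFun P Q ℙ)
    (hP : Measure.map P ℙ = unifSquare)
    (hQ : Measure.map Q ℙ = unifSquare) :
    ∫ ω, dist (P ω) (Q ω) ∂ℙ =
      (2 + Real.sqrt 2 + 5 * Real.log (Real.sqrt 2 + 1)) / 15 := by
  have hne : unifSquare ≠ 0 := by
    intro h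
    have h1 := unifSquare_univ
    rw [h] at h1
    simp at h1
  have hPae : AEMeasurable P ℙ := by
    by_contra h
    exact hne (by rw [← hP, Measure.map_of_not_aemeasurable h])
  have hQae : AEMeasurable Q ℙ := by
    by_contra h
    exact hne (by rw [← hQ, Measure.map_of_not_aemeasurable h])
  have hmap : Measure.map (fun ω => (P ω, Q ω)) ℙ = unifSquare.prod unifSquare := by
    rw [(ProbabilityTheory.indepFun_iff_map_prod_eq_prod_map_map hPae hQae).mp hPQ, hP, hQ]
  set g : (ℝ×ℝ)×(ℝ×ℝ) → ℝ := fun w => Real.sqrt ((w.1.1-w.2.1)^2 + (w.1.2-w.2.2)^2) with hg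
  have hgc : Continuous g := by fun_prop
  have hlhs : ∫ ω, dist (P ω) (Q ω) ∂ℙ = ∫ z, dist z.1 z.2 ∂(unifSquare.prod unifSquare) := by
    rw [← hmap]
    exact (integral_map (hPae.prodMk hQae)
      (continuous_dist.aestronglyMeasurable)).symm
  rw [hlhs]
  have hdist : ∀ z : EuclideanSpace ℝ (Fin 2) × EuclideanSpace ℝ (Fin 2),
      dist z.1 z.2 = g (Prod.map φe φe z) := by
    intro z
    rw [EuclideanSpace.dist_eq, Fin.sum_univ_two]
    show _ = Real.sqrt ((z.1 0 - z.2 0)^2 + (z.1 1 - z.2 1)^2)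
    simp only [Real.dist_eq, sq_abs]
  simp_rw [hdist]
  have hcomp := (hUS.prod hUS).integral_comp
    ((φe.prodCongr φe).measurableEmbedding) g
  rw [show (fun z => g (Prod.map (⇑φe) (⇑φe) z)) = fun z => g ((φe.prodCongr φe) z) from rfl]
  rw [show ∫ z, g ((φe.prodCongr φe) z) ∂(unifSquare.prod unifSquare)
      = ∫ w, g w ∂((volume.restrict (Set.Icc (0:ℝ) 1 ×ˢ Set.Icc (0:ℝ) 1)).prod
        (volume.restrict (Set.Icc (0:ℝ) 1 ×ˢ Set.Icc (0:ℝ) 1))) from hcomp]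
  -- switch to iterated integrals
  set M : Measure ℝ := volume.restrict (Set.Icc (0:ℝ) 1) with hM
  have hRM : volume.restrict (Set.Icc (0:ℝ) 1 ×ˢ Set.Icc (0:ℝ) 1) = M.prod M := by
    rw [hM, Measure.prod_restrict, ← Measure.volume_eq_prod]
  rw [hRM]
  have hKcompact : IsCompact ((Set.Icc (0:ℝ) 1 ×ˢ Set.Icc (0:ℝ) 1) ×ˢ
      (Set.Icc (0:ℝ) 1 ×ˢ Set.Icc (0:ℝ) 1)) :=
    (isCompact_Icc.prod isCompact_Icc).prod (isCompact_Icc.prod isCompact_Icc)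
  have hint1 : Integrable g ((M.prod M).prod (M.prod M)) := by
    rw [hM, Measure.prod_restrict, ← Measure.volume_eq_prod, Measure.prod_restrict,
      ← Measure.volume_eq_prod]
    exact hgc.continuousOn.integrableOn_compact hKcompact
  rw [MeasureTheory.integral_prod g hint1]
  have hint2 : ∀ p : ℝ × ℝ, Integrable (fun q => g (p, q)) (M.prod M) := by
    intro p
    rw [hM, Measure.prod_restrict, ← Measure.volume_eq_prod]
    exact (hgc.comp (Continuous.prodMk_right p)).continuousOn.integrableOn_compact
      (isCompact_Icc.prod isCompact_Icc)
  have e1 : ∀ p : ℝ × ℝ, (∫ q, g (p, q) ∂(M.prod M)) = ∫ c, ∫ d, g (p, (c, d)) ∂M ∂M :=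
    fun p => MeasureTheory.integral_prod _ (hint2 p)
  rw [MeasureTheory.integral_prod _ hint1.integral_prod_left]
  simp_rw [e1]
  have hIcc : ∀ f : ℝ → ℝ, (∫ x, f x ∂M) = ∫ x in (0:ℝ)..1, f x := by
    intro f
    rw [hM, show ∫ x, f x ∂(volume.restrict (Set.Icc (0:ℝ) 1)) = ∫ x in Set.Icc (0:ℝ) 1, f x
      from rfl, MeasureTheory.integral_Icc_eq_integral_Ioc,
      ← intervalIntegral.integral_of_le zero_le_one]
  simp_rw [hIcc]
  have harsinh : Real.arsinh 1 = Real.log (Real.sqrt 2 + 1) := by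
    unfold Real.arsinh
    norm_num [add_comm]
  rw [← harsinh, ← quadruple_eval]

end Final
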